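/- arXiv:2403.18357 — 2 statements merged into one kernel-verified Lean document; each statement's English description precedes it below -/
import Mathlib

section
/- Let Q₁ be the Coordinate block privacy mechanism with total privacy level α = Σ_{ℓ∈𝓛} α_ℓ, and let Q be the mechanism which, independently for each individual i = 1,…,n, draws Z_i ∼ Q₁(·|X_i). Then Q provides non-interactive α-locally differentially private views of X₁,…,Xₙ: for every i, every pair of inputs x, x′, and every set B of outputs, Q₁(B | X = x) ≤ e^α · Q₁(B | X = x′). -/
open MeasureTheory ProbabilityTheory Real
open scoped BigOperators ENNReal

noncomputable section

/-- `Γ_k = 2^{k-1} / C(k-1, ⌊(k-1)/2⌋)`. -/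
noncomputable def Gam (k : ℕ) : ℝ := 2 ^ (k - 1) / (Nat.choose (k - 1) ((k - 1) / 2) : ℝ)

/-- `B_k(a) = B₀ Γ_k (e^a+1)/(e^a-1)`. -/
noncomputable def Bk (B₀ : ℝ) (k : ℕ) (a : ℝ) : ℝ :=
  B₀ * ((Real.exp a + 1) / (Real.exp a - 1)) * Gam k

/-- `ξ_A = A (e^A+1)/(e^A-1)`. -/
noncomputable def xiA (A : ℝ) : ℝ := A * (Real.exp A + 1) / (Real.exp A - 1)

section Mechanism

variable {𝒳 : Type*} [MeasurableSpace 𝒳]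
variable {𝒥 𝓛 : Type*} [Fintype 𝒥] [DecidableEq 𝒥] [Fintype 𝓛] [DecidableEq 𝓛]

/-- The block of indices with label `ℓ`. -/
def BlkT (blk : 𝒥 → 𝓛) (ℓ : 𝓛) : Type _ := {j : 𝒥 // blk j = ℓ}

instance (blk : 𝒥 → 𝓛) (ℓ : 𝓛) : Fintype (BlkT blk ℓ) :=
  Subtype.fintype _

instance (blk : 𝒥 → 𝓛) (ℓ : 𝓛) : DecidableEq (BlkT blk ℓ) :=
  Subtype.instDecidableEq

/-- `d_ℓ`, the cardinality of block `ℓ`. -/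
noncomputable def dl (blk : 𝒥 → 𝓛) (ℓ : 𝓛) : ℕ := Fintype.card (BlkT blk ℓ)

/-- sign vector to real vector with magnitude `c`. -/
def signVal (c : ℝ) (b : Bool) : ℝ := if b then c else -c

variable (blk : 𝒥 → 𝓛) (αl : 𝓛 → ℝ) (B₀ : ℝ)

/-- Magnitude of the output coordinates in block `ℓ`. -/
noncomputable def Bval (ℓ : 𝓛) : ℝ := Bk B₀ (dl blk ℓ) (αl ℓ)

/-- Inner product `⟨z, ṽ⟩` over block `ℓ`, where `σ` (resp. `τ`) is the sign
vector of `z ∈ {±B_{d_ℓ}(α_ℓ)}^{d_ℓ}` (resp. of `ṽ ∈ {±B₀}^{d_ℓ}`). -/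
noncomputable def ipZ (ℓ : 𝓛) (σ τ : BlkT blk ℓ → Bool) : ℝ :=
  ∑ j : BlkT blk ℓ, signVal (Bval blk αl B₀ ℓ) (σ j) * signVal B₀ (τ j)

open scoped Classical in
/-- `|{z : ⟨z,ṽ⟩ > 0}|`. -/
noncomputable def DplusCard (ℓ : 𝓛) (τ : BlkT blk ℓ → Bool) : ℕ :=
  (Finset.univ.filter fun σ : BlkT blk ℓ → Bool => 0 < ipZ blk αl B₀ ℓ σ τ).card

open scoped Classical in
/-- `|{z : ⟨z,ṽ⟩ < 0}|`. -/
noncomputable def DminusCard (ℓ : 𝓛) (τ : BlkT blk ℓ → Bool) : ℕ :=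
  (Finset.univ.filter fun σ : BlkT blk ℓ → Bool => ipZ blk αl B₀ ℓ σ τ < 0).card

open scoped Classical in
/-- `|{z : ⟨z,ṽ⟩ = 0}|`. -/
noncomputable def DzeroCard (ℓ : 𝓛) (τ : BlkT blk ℓ → Bool) : ℕ :=
  (Finset.univ.filter fun σ : BlkT blk ℓ → Bool => ipZ blk αl B₀ ℓ σ τ = 0).card

/-- `p_ℓ`: probability that `Y_ℓ = 1`. -/
noncomputable def pl (ℓ : 𝓛) : ℝ :=
  if dl blk ℓ % 2 = 1 then 1
  else 1 - (Nat.choose (dl blk ℓ) (dl blk ℓ / 2) : ℝ) / 2 ^ dl blk ℓ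

/-- `π_{α_ℓ} = e^{α_ℓ}/(1+e^{α_ℓ})`. -/
noncomputable def pil (ℓ : 𝓛) : ℝ := Real.exp (αl ℓ) / (1 + Real.exp (αl ℓ))

/-- Conditional probability `P(Z_{[ℓ]} = z | Ṽ_{[ℓ]} = ṽ)` (as a function of the
sign vectors `σ` of `z` and `τ` of `ṽ`): with probability `p_ℓ`, draw
`T_ℓ ∼ B(π_{α_ℓ})` and pick `z` uniformly on `{⟨z,ṽ⟩ > 0}` if `T_ℓ = 1`,
uniformly on `{⟨z,ṽ⟩ < 0}` if `T_ℓ = 0`; with probability `1 - p_ℓ` pick `z`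
uniformly on `{⟨z,ṽ⟩ = 0}`. -/
noncomputable def condP (ℓ : 𝓛) (τ σ : BlkT blk ℓ → Bool) : ℝ :=
  pl blk ℓ * (pil αl ℓ *
      (if 0 < ipZ blk αl B₀ ℓ σ τ then ((DplusCard blk αl B₀ ℓ τ : ℝ))⁻¹ else 0)
    + (1 - pil αl ℓ) *
      (if ipZ blk αl B₀ ℓ σ τ < 0 then ((DminusCard blk αl B₀ ℓ τ : ℝ))⁻¹ else 0))
  + (1 - pl blk ℓ) *
      (if ipZ blk αl B₀ ℓ σ τ = 0 then ((DzeroCard blk αl B₀ ℓ τ : ℝ))⁻¹ else 0)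

variable (φ : 𝒥 → 𝒳 → ℝ)

/-- `P(Ṽ_{[ℓ]} = ṽ | X = x)`: independent coordinates, `Ṽ_j = B₀` with
probability `1/2 + φ_j(x)/(2B₀)` and `-B₀` otherwise. -/
noncomputable def vP (x : 𝒳) (ℓ : 𝓛) (τ : BlkT blk ℓ → Bool) : ℝ :=
  ∏ j : BlkT blk ℓ,
    (if τ j then 1/2 + φ j.1 x / (2 * B₀) else 1/2 - φ j.1 x / (2 * B₀))

/-- `P(Z_{[ℓ]} = z | X = x)` for the block `ℓ`. -/
noncomputable def blockP (x : 𝒳) (ℓ : 𝓛) (σ : BlkT blk ℓ → Bool) : ℝ :=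
  ∑ τ : BlkT blk ℓ → Bool, vP blk B₀ φ x ℓ τ * condP blk αl B₀ ℓ τ σ

/-- Probability of the full output sign vector `σ` given `X = x` (blocks are
drawn independently). -/
noncomputable def mechP (x : 𝒳) (σ : 𝒥 → Bool) : ℝ :=
  ∏ ℓ : 𝓛, blockP blk αl B₀ φ x ℓ (fun j => σ j.1)

/-- Output vector associated with a sign vector. -/
noncomputable def zOf (σ : 𝒥 → Bool) : 𝒥 → ℝ :=
  fun j => signVal (Bval blk αl B₀ (blk j)) (σ j)

/-- The Coordinate block privacy mechanism `Q₁`: the conditional distribution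
of the private view `Z = (Z_j)_{j ∈ 𝒥} ∈ ∏_ℓ {±B_{d_ℓ}(α_ℓ)}^{d_ℓ}` given `X = x`. -/
noncomputable def mechQ (x : 𝒳) : Measure (𝒥 → ℝ) :=
  ∑ σ : 𝒥 → Bool, ENNReal.ofReal (mechP blk αl B₀ φ x σ) • Measure.dirac (zOf blk αl B₀ σ)

end Mechanism

end


section AuxProofs

open Finset
open scoped Classical
set_option linter.unusedSectionVars false
set_option linter.unreachableTactic false
set_option linter.unusedTactic false

variable {𝒳 : Type*} [MeasurableSpace 𝒳]
variable {𝒥 𝓛 : Type*} [Fintype 𝒥] [DecidableEq 𝒥] [Fintype 𝓛] [DecidableEq 𝓛]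
variable (blk : 𝒥 → 𝓛) (αl : 𝓛 → ℝ) (B₀ : ℝ)

lemma exp_gt_one {a : ℝ} (ha : 0 < a) : 1 < Real.exp a := by
  have := Real.exp_lt_exp.mpr ha
  simpa [Real.exp_zero] using this

lemma Bval_pos (ℓ : 𝓛) (hα : 0 < αl ℓ) (hB₀ : 0 < B₀) : 0 < Bval blk αl B₀ ℓ := by
  unfold Bval Bk Gam
  have h1 : (0:ℝ) < Real.exp (αl ℓ) - 1 := by
    have := exp_gt_one hα; linarith
  have h2 : (0:ℝ) < (Nat.choose (dl blk ℓ - 1) ((dl blk ℓ - 1)/2) : ℝ) := by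
    exact_mod_cast Nat.choose_pos (Nat.div_le_self _ _)
  have h3 : (0:ℝ) < Real.exp (αl ℓ) + 1 := by positivity
  exact mul_pos (mul_pos hB₀ (div_pos h3 h1)) (div_pos (by positivity) h2)

lemma ipZ_eq (ℓ : 𝓛) (σ τ : BlkT blk ℓ → Bool) :
    ipZ blk αl B₀ ℓ σ τ = (Bval blk αl B₀ ℓ * B₀) *
      (2 * ((Finset.univ.filter fun j => σ j = τ j).card : ℝ) - (dl blk ℓ : ℝ)) := by
  unfold ipZ
  have h : ∀ j, signVal (Bval blk αl B₀ ℓ) (σ j) * signVal B₀ (τ j)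
      = if σ j = τ j then Bval blk αl B₀ ℓ * B₀ else -(Bval blk αl B₀ ℓ * B₀) := by
    intro j; cases hσ : σ j <;> cases hτ : τ j <;> simp [signVal] <;> ring
  rw [Finset.sum_congr rfl fun j _ => h j, Finset.sum_ite, Finset.sum_const, Finset.sum_const]
  have hle : (Finset.univ.filter fun j => σ j = τ j).card ≤ dl blk ℓ := by
    have := Finset.card_filter_le (Finset.univ : Finset (BlkT blk ℓ)) (fun j => σ j = τ j)
    simpa [dl, Finset.card_univ] using this
  have hcard : (Finset.univ.filter fun j => ¬ σ j = τ j).card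
      = dl blk ℓ - (Finset.univ.filter fun j => σ j = τ j).card := by
    have h2 := Finset.card_filter_add_card_filter_not
      (s := (Finset.univ : Finset (BlkT blk ℓ))) (p := fun j => σ j = τ j)
    have h3 : (Finset.univ : Finset (BlkT blk ℓ)).card = dl blk ℓ := Finset.card_univ
    omega
  rw [hcard, nsmul_eq_mul, nsmul_eq_mul]
  push_cast [Nat.cast_sub hle]
  ring

lemma card_agree (ℓ : 𝓛) (τ : BlkT blk ℓ → Bool) (k : ℕ) :
    (Finset.univ.filter fun σ : BlkT blk ℓ → Bool =>
      (Finset.univ.filter fun j => σ j = τ j).card = k).card = (dl blk ℓ).choose k := by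
  have hrw : (dl blk ℓ).choose k
      = (Finset.powersetCard k (Finset.univ : Finset (BlkT blk ℓ))).card := by
    rw [Finset.card_powersetCard, Finset.card_univ]; rfl
  rw [hrw]
  apply Finset.card_bij' (fun σ _ => Finset.univ.filter fun j => σ j = τ j)
    (fun s _ => fun j => if j ∈ s then τ j else !τ j)
  · intro σ hσ
    simp only [Finset.mem_filter, Finset.mem_univ, true_and] at hσ
    simp [Finset.mem_powersetCard, hσ]
  · intro s hs
    simp only [Finset.mem_powersetCard] at hs
    simp only [Finset.mem_filter, Finset.mem_univ, true_and]
    rw [← hs.2]; congr 1; ext j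
    simp only [Finset.mem_filter, Finset.mem_univ, true_and]
    by_cases h : j ∈ s <;> simp [h]
  · intro σ hσ; funext j
    by_cases h : σ j = τ j
    · simp [h]
    · simp only [Finset.mem_filter, Finset.mem_univ, true_and, h, if_false]
      cases hs : σ j <;> cases ht : τ j <;> simp_all
  · intro s hs; ext j
    simp only [Finset.mem_filter, Finset.mem_univ, true_and]
    by_cases h : j ∈ s <;> simp [h]

lemma ipZ_neg_left (ℓ : 𝓛) (σ τ : BlkT blk ℓ → Bool) :
    ipZ blk αl B₀ ℓ (fun j => !σ j) τ = - ipZ blk αl B₀ ℓ σ τ := by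
  unfold ipZ
  rw [← Finset.sum_neg_distrib]
  apply Finset.sum_congr rfl
  intro j _
  cases h1 : σ j <;> cases h2 : τ j <;> simp [signVal, h1, h2] <;> ring

lemma Dplus_eq_Dminus (ℓ : 𝓛) (τ : BlkT blk ℓ → Bool) :
    DplusCard blk αl B₀ ℓ τ = DminusCard blk αl B₀ ℓ τ := by
  unfold DplusCard DminusCard
  apply Finset.card_bij' (fun σ _ => fun j => !σ j) (fun σ _ => fun j => !σ j)
  · intro σ hσ
    simp only [Finset.mem_filter, Finset.mem_univ, true_and] at hσ ⊢
    rw [ipZ_neg_left]; linarith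
  · intro σ hσ
    simp only [Finset.mem_filter, Finset.mem_univ, true_and] at hσ ⊢
    rw [ipZ_neg_left]; linarith
  · intro σ _; funext j; simp
  · intro σ _; funext j; simp

lemma Dzero_eq (ℓ : 𝓛) (hα : 0 < αl ℓ) (hB₀ : 0 < B₀) (τ : BlkT blk ℓ → Bool) :
    DzeroCard blk αl B₀ ℓ τ
      = if dl blk ℓ % 2 = 1 then 0 else (dl blk ℓ).choose (dl blk ℓ / 2) := by
  have hc : 0 < Bval blk αl B₀ ℓ * B₀ := mul_pos (Bval_pos blk αl B₀ ℓ hα hB₀) hB₀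
  unfold DzeroCard
  by_cases hodd : dl blk ℓ % 2 = 1
  · rw [if_pos hodd]
    rw [Finset.card_eq_zero, Finset.filter_eq_empty_iff]
    intro σ _
    rw [ipZ_eq blk αl B₀]
    intro h
    have h2 : 2 * ((Finset.univ.filter fun j => σ j = τ j).card : ℝ) - (dl blk ℓ : ℝ) = 0 := by
      rcases mul_eq_zero.mp h with h' | h'
      · exact absurd h' (ne_of_gt hc)
      · exact h'
    have h3 : 2 * (Finset.univ.filter fun j => σ j = τ j).card = dl blk ℓ := by
      exact_mod_cast sub_eq_zero.mp h2
    omega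
  · rw [if_neg hodd]
    rw [← card_agree blk ℓ τ (dl blk ℓ / 2)]
    congr 1
    apply Finset.filter_congr
    intro σ _
    rw [ipZ_eq blk αl B₀]
    constructor
    · intro h
      have h2 : 2 * ((Finset.univ.filter fun j => σ j = τ j).card : ℝ) - (dl blk ℓ : ℝ) = 0 := by
        rcases mul_eq_zero.mp h with h' | h'
        · exact absurd h' (ne_of_gt hc)
        · exact h'
      have h3 : 2 * (Finset.univ.filter fun j => σ j = τ j).card = dl blk ℓ := by
        exact_mod_cast sub_eq_zero.mp h2
      omega
    · intro h
      have h3 : 2 * (Finset.univ.filter fun j => σ j = τ j).card = dl blk ℓ := by omega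
      have : 2 * ((Finset.univ.filter fun j => σ j = τ j).card : ℝ) - (dl blk ℓ : ℝ) = 0 := by
        rw [← h3]; push_cast; ring
      rw [this, mul_zero]

lemma D_partition (ℓ : 𝓛) (τ : BlkT blk ℓ → Bool) :
    DplusCard blk αl B₀ ℓ τ + DminusCard blk αl B₀ ℓ τ + DzeroCard blk αl B₀ ℓ τ
      = 2 ^ dl blk ℓ := by
  unfold DplusCard DminusCard DzeroCard
  have hcard : (Finset.univ : Finset (BlkT blk ℓ → Bool)).card = 2 ^ dl blk ℓ := by
    rw [Finset.card_univ, Fintype.card_fun, Fintype.card_bool]; rfl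
  rw [← hcard]
  rw [← Finset.card_union_of_disjoint, ← Finset.card_union_of_disjoint]
  · congr 1
    ext σ
    simp only [Finset.mem_union, Finset.mem_filter, Finset.mem_univ, true_and, iff_true]
    rcases lt_trichotomy (ipZ blk αl B₀ ℓ σ τ) 0 with h | h | h
    · exact Or.inl (Or.inr h)
    · exact Or.inr h
    · exact Or.inl (Or.inl h)
  · rw [Finset.disjoint_left]
    intro σ h1 h2
    simp only [Finset.mem_union, Finset.mem_filter, Finset.mem_univ, true_and] at h1 h2
    rcases h1 with h1 | h1 <;> rw [h2] at h1 <;> exact lt_irrefl _ h1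
  · rw [Finset.disjoint_left]
    intro σ h1 h2
    simp only [Finset.mem_filter, Finset.mem_univ, true_and] at h1 h2
    linarith

lemma one_le_Dplus (ℓ : 𝓛) (hα : 0 < αl ℓ) (hB₀ : 0 < B₀) (hne : Nonempty (BlkT blk ℓ))
    (τ : BlkT blk ℓ → Bool) : 1 ≤ DplusCard blk αl B₀ ℓ τ := by
  have hc : 0 < Bval blk αl B₀ ℓ * B₀ := mul_pos (Bval_pos blk αl B₀ ℓ hα hB₀) hB₀
  have hd : 0 < dl blk ℓ := Fintype.card_pos
  have hmem : τ ∈ Finset.univ.filter (fun σ : BlkT blk ℓ → Bool => 0 < ipZ blk αl B₀ ℓ σ τ) := by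
    simp only [Finset.mem_filter, Finset.mem_univ, true_and]
    rw [ipZ_eq]
    have h1 : (Finset.univ.filter fun j : BlkT blk ℓ => τ j = τ j) = Finset.univ := by simp
    have h2 : (Finset.univ : Finset (BlkT blk ℓ)).card = dl blk ℓ := Finset.card_univ
    rw [h1, h2]
    have hd' : (1:ℝ) ≤ (dl blk ℓ : ℝ) := by exact_mod_cast hd
    nlinarith [hc]
  unfold DplusCard
  exact Finset.card_pos.mpr ⟨τ, hmem⟩

lemma pil_lt_one (ℓ : 𝓛) : pil αl ℓ < 1 := by
  unfold pil
  rw [div_lt_one (by positivity)]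
  linarith [Real.exp_pos (αl ℓ)]

lemma pil_pos (ℓ : 𝓛) : 0 < pil αl ℓ := by
  unfold pil
  positivity

lemma condP_eq (ℓ : 𝓛) (hα : 0 < αl ℓ) (hB₀ : 0 < B₀) (hne : Nonempty (BlkT blk ℓ))
    (τ σ : BlkT blk ℓ → Bool) :
    condP blk αl B₀ ℓ τ σ =
      if 0 < ipZ blk αl B₀ ℓ σ τ then 2 * pil αl ℓ / 2 ^ dl blk ℓ
      else if ipZ blk αl B₀ ℓ σ τ < 0 then 2 * (1 - pil αl ℓ) / 2 ^ dl blk ℓ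
      else 1 / 2 ^ dl blk ℓ := by
  set C : ℕ := if dl blk ℓ % 2 = 1 then 0 else (dl blk ℓ).choose (dl blk ℓ / 2) with hC
  have hE : (0:ℝ) < 2 ^ dl blk ℓ := by positivity
  have hplus1 : 1 ≤ DplusCard blk αl B₀ ℓ τ := one_le_Dplus blk αl B₀ ℓ hα hB₀ hne τ
  have hzero : DzeroCard blk αl B₀ ℓ τ = C := Dzero_eq blk αl B₀ ℓ hα hB₀ τ
  have hpm : DplusCard blk αl B₀ ℓ τ = DminusCard blk αl B₀ ℓ τ := Dplus_eq_Dminus blk αl B₀ ℓ τ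
  have hsumN : 2 * DplusCard blk αl B₀ ℓ τ + C = 2 ^ dl blk ℓ := by
    have := D_partition blk αl B₀ ℓ τ
    omega
  have hDp : (DplusCard blk αl B₀ ℓ τ : ℝ) = ((2:ℝ) ^ dl blk ℓ - (C:ℝ)) / 2 := by
    have : (2:ℝ) * (DplusCard blk αl B₀ ℓ τ : ℝ) + (C:ℝ) = (2:ℝ) ^ dl blk ℓ := by
      exact_mod_cast hsumN
    linarith
  have hDppos : (1:ℝ) ≤ (DplusCard blk αl B₀ ℓ τ : ℝ) := by exact_mod_cast hplus1
  have hEC : (0:ℝ) < (2:ℝ) ^ dl blk ℓ - (C:ℝ) := by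
    rw [hDp] at hDppos; linarith
  have hpl : pl blk ℓ = ((2:ℝ) ^ dl blk ℓ - (C:ℝ)) / 2 ^ dl blk ℓ := by
    unfold pl
    by_cases h : dl blk ℓ % 2 = 1
    · rw [if_pos h, hC, if_pos h]
      push_cast
      rw [eq_comm, div_eq_one_iff_eq (ne_of_gt hE)]
      ring
    · rw [if_neg h, hC, if_neg h]
      field_simp
  rcases lt_trichotomy (ipZ blk αl B₀ ℓ σ τ) 0 with hip | hip | hip
  · rw [if_neg (by linarith), if_pos hip]
    unfold condP
    rw [if_neg (by linarith), if_pos hip, if_neg (by linarith)]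
    rw [hpl, ← hpm, hDp]
    field_simp
    ring
  · rw [if_neg (by rw [hip]; exact lt_irrefl 0), if_neg (by rw [hip]; exact lt_irrefl 0)]
    unfold condP
    rw [if_neg (by rw [hip]; exact lt_irrefl 0), if_neg (by rw [hip]; exact lt_irrefl 0),
      if_pos hip]
    have hC1 : 1 ≤ C := by
      rw [← hzero]
      apply Finset.card_pos.mpr
      exact ⟨σ, by simp only [Finset.mem_filter, Finset.mem_univ, true_and]; exact hip⟩
    have hC1' : (0:ℝ) < (C:ℝ) := by exact_mod_cast hC1
    rw [hzero, hpl]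
    have h1pl : 1 - ((2:ℝ) ^ dl blk ℓ - (C:ℝ)) / 2 ^ dl blk ℓ = (C:ℝ) / 2 ^ dl blk ℓ := by
      field_simp
      ring
    rw [h1pl]
    field_simp
    ring
  · rw [if_pos hip]
    unfold condP
    rw [if_pos hip, if_neg (by linarith), if_neg (by linarith)]
    rw [hpl, hDp]
    field_simp
    ring

lemma two_pil_facts (ℓ : 𝓛) (hα : 0 < αl ℓ) :
    1 ≤ 2 * pil αl ℓ ∧ 2 * (1 - pil αl ℓ) ≤ 1 := by
  have he := exp_gt_one hα
  have hpos : (0:ℝ) < 1 + Real.exp (αl ℓ) := by positivity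
  have hπ : pil αl ℓ = Real.exp (αl ℓ) / (1 + Real.exp (αl ℓ)) := rfl
  constructor
  · rw [hπ, ← mul_div_assoc, le_div_iff₀ hpos]
    linarith
  · have h1mp : 1 - pil αl ℓ = 1/(1 + Real.exp (αl ℓ)) := by
      rw [hπ]; field_simp
      ring
    rw [h1mp, ← mul_div_assoc, div_le_one hpos]
    linarith

lemma condP_le_ub (ℓ : 𝓛) (hα : 0 < αl ℓ) (hB₀ : 0 < B₀) (hne : Nonempty (BlkT blk ℓ))
    (τ σ : BlkT blk ℓ → Bool) :
    condP blk αl B₀ ℓ τ σ ≤ 2 * pil αl ℓ / 2 ^ dl blk ℓ := by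
  have hE : (0:ℝ) < 2 ^ dl blk ℓ := by positivity
  obtain ⟨h1, h2⟩ := two_pil_facts αl ℓ hα
  rw [condP_eq blk αl B₀ ℓ hα hB₀ hne τ σ]
  split_ifs with h h'
  · exact le_refl _
  · gcongr
    linarith
  · gcongr

lemma condP_ge_lb (ℓ : 𝓛) (hα : 0 < αl ℓ) (hB₀ : 0 < B₀) (hne : Nonempty (BlkT blk ℓ))
    (τ σ : BlkT blk ℓ → Bool) :
    2 * (1 - pil αl ℓ) / 2 ^ dl blk ℓ ≤ condP blk αl B₀ ℓ τ σ := by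
  have hE : (0:ℝ) < 2 ^ dl blk ℓ := by positivity
  obtain ⟨h1, h2⟩ := two_pil_facts αl ℓ hα
  rw [condP_eq blk αl B₀ ℓ hα hB₀ hne τ σ]
  split_ifs with h h'
  · gcongr
    linarith
  · exact le_refl _
  · gcongr

lemma ub_eq_exp_mul_lb (ℓ : 𝓛) (hα : 0 < αl ℓ) :
    2 * pil αl ℓ / 2 ^ dl blk ℓ
      = Real.exp (αl ℓ) * (2 * (1 - pil αl ℓ) / 2 ^ dl blk ℓ) := by
  have he := exp_gt_one hα
  have hpos : (0:ℝ) < 1 + Real.exp (αl ℓ) := by positivity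
  have hE : (0:ℝ) < 2 ^ dl blk ℓ := by positivity
  have hπ : pil αl ℓ = Real.exp (αl ℓ) / (1 + Real.exp (αl ℓ)) := rfl
  rw [hπ]
  field_simp
  ring

lemma condP_nonneg (ℓ : 𝓛) (hα : 0 < αl ℓ) (hB₀ : 0 < B₀) (hne : Nonempty (BlkT blk ℓ))
    (τ σ : BlkT blk ℓ → Bool) : 0 ≤ condP blk αl B₀ ℓ τ σ := by
  refine le_trans ?_ (condP_ge_lb blk αl B₀ ℓ hα hB₀ hne τ σ)
  have h1 : pil αl ℓ < 1 := pil_lt_one αl ℓ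
  have hE : (0:ℝ) < 2 ^ dl blk ℓ := by positivity
  apply div_nonneg _ hE.le
  nlinarith

variable (φ : 𝒥 → 𝒳 → ℝ)

lemma vP_nonneg (hB₀ : 0 < B₀) (hφ : ∀ j x, |φ j x| ≤ B₀) (x : 𝒳) (ℓ : 𝓛)
    (τ : BlkT blk ℓ → Bool) : 0 ≤ vP blk B₀ φ x ℓ τ := by
  apply Finset.prod_nonneg
  intro j _
  obtain ⟨ha, hb⟩ := abs_le.mp (hφ j.1 x)
  split_ifs with h
  · have h0 : (0:ℝ) ≤ (B₀ + φ j.1 x) / (2*B₀) := div_nonneg (by linarith) (by linarith)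
    have heq : (B₀ + φ j.1 x) / (2*B₀) = 1/2 + φ j.1 x/(2*B₀) := by
      field_simp
    linarith [heq ▸ h0]
  · have h0 : (0:ℝ) ≤ (B₀ - φ j.1 x) / (2*B₀) := div_nonneg (by linarith) (by linarith)
    have heq : (B₀ - φ j.1 x) / (2*B₀) = 1/2 - φ j.1 x/(2*B₀) := by
      field_simp
    linarith [heq ▸ h0]

lemma vP_sum_one (hB₀ : 0 < B₀) (x : 𝒳) (ℓ : 𝓛) :
    ∑ τ : BlkT blk ℓ → Bool, vP blk B₀ φ x ℓ τ = 1 := by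
  unfold vP
  have h := Finset.prod_univ_sum (fun _ : BlkT blk ℓ => (Finset.univ : Finset Bool))
    (fun j b => if b then 1/2 + φ j.1 x / (2 * B₀) else 1/2 - φ j.1 x / (2 * B₀))
  rw [Fintype.piFinset_univ] at h
  rw [← h]
  apply Finset.prod_eq_one
  intro j _
  rw [Fintype.sum_bool]
  norm_num

lemma blockP_le (ℓ : 𝓛) (hα : 0 < αl ℓ) (hB₀ : 0 < B₀) (hne : Nonempty (BlkT blk ℓ))
    (hφ : ∀ j x, |φ j x| ≤ B₀) (x x' : 𝒳) (σ : BlkT blk ℓ → Bool) :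
    blockP blk αl B₀ φ x ℓ σ ≤ Real.exp (αl ℓ) * blockP blk αl B₀ φ x' ℓ σ := by
  have hexp : (0:ℝ) ≤ Real.exp (αl ℓ) := (Real.exp_pos _).le
  have h1 : blockP blk αl B₀ φ x ℓ σ ≤ 2 * pil αl ℓ / 2 ^ dl blk ℓ := by
    unfold blockP
    calc ∑ τ : BlkT blk ℓ → Bool, vP blk B₀ φ x ℓ τ * condP blk αl B₀ ℓ τ σ
        ≤ ∑ τ : BlkT blk ℓ → Bool, vP blk B₀ φ x ℓ τ * (2 * pil αl ℓ / 2 ^ dl blk ℓ) := by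
          apply Finset.sum_le_sum
          intro τ _
          exact mul_le_mul_of_nonneg_left (condP_le_ub blk αl B₀ ℓ hα hB₀ hne τ σ)
            (vP_nonneg blk B₀ φ hB₀ hφ x ℓ τ)
      _ = 2 * pil αl ℓ / 2 ^ dl blk ℓ := by
          rw [← Finset.sum_mul, vP_sum_one blk B₀ φ hB₀ x ℓ, one_mul]
  have h2 : 2 * (1 - pil αl ℓ) / 2 ^ dl blk ℓ ≤ blockP blk αl B₀ φ x' ℓ σ := by
    unfold blockP
    calc (2 * (1 - pil αl ℓ) / 2 ^ dl blk ℓ)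
        = ∑ τ : BlkT blk ℓ → Bool, vP blk B₀ φ x' ℓ τ * (2 * (1 - pil αl ℓ) / 2 ^ dl blk ℓ) := by
          rw [← Finset.sum_mul, vP_sum_one blk B₀ φ hB₀ x' ℓ, one_mul]
      _ ≤ ∑ τ : BlkT blk ℓ → Bool, vP blk B₀ φ x' ℓ τ * condP blk αl B₀ ℓ τ σ := by
          apply Finset.sum_le_sum
          intro τ _
          exact mul_le_mul_of_nonneg_left (condP_ge_lb blk αl B₀ ℓ hα hB₀ hne τ σ)
            (vP_nonneg blk B₀ φ hB₀ hφ x' ℓ τ)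
  calc blockP blk αl B₀ φ x ℓ σ ≤ 2 * pil αl ℓ / 2 ^ dl blk ℓ := h1
    _ = Real.exp (αl ℓ) * (2 * (1 - pil αl ℓ) / 2 ^ dl blk ℓ) := ub_eq_exp_mul_lb blk αl ℓ hα
    _ ≤ Real.exp (αl ℓ) * blockP blk αl B₀ φ x' ℓ σ := mul_le_mul_of_nonneg_left h2 hexp

lemma blockP_nonneg (ℓ : 𝓛) (hα : 0 < αl ℓ) (hB₀ : 0 < B₀) (hne : Nonempty (BlkT blk ℓ))
    (hφ : ∀ j x, |φ j x| ≤ B₀) (x : 𝒳) (σ : BlkT blk ℓ → Bool) :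
    0 ≤ blockP blk αl B₀ φ x ℓ σ := by
  apply Finset.sum_nonneg
  intro τ _
  exact mul_nonneg (vP_nonneg blk B₀ φ hB₀ hφ x ℓ τ)
    (condP_nonneg blk αl B₀ ℓ hα hB₀ hne τ σ)

lemma mechP_le (hblk : Function.Surjective blk) (hαl : ∀ ℓ, 0 < αl ℓ) (hB₀ : 0 < B₀)
    (hφ : ∀ j x, |φ j x| ≤ B₀) (x x' : 𝒳) (σ : 𝒥 → Bool) :
    mechP blk αl B₀ φ x σ ≤ Real.exp (∑ ℓ, αl ℓ) * mechP blk αl B₀ φ x' σ := by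
  have hne : ∀ ℓ : 𝓛, Nonempty (BlkT blk ℓ) := by
    intro ℓ
    obtain ⟨j, hj⟩ := hblk ℓ
    exact ⟨⟨j, hj⟩⟩
  rw [Real.exp_sum]
  unfold mechP
  rw [← Finset.prod_mul_distrib]
  apply Finset.prod_le_prod
  · intro ℓ _
    exact blockP_nonneg blk αl B₀ φ ℓ (hαl ℓ) hB₀ (hne ℓ) hφ x _
  · intro ℓ _
    exact blockP_le blk αl B₀ φ ℓ (hαl ℓ) hB₀ (hne ℓ) hφ x x' _

end AuxProofs

/-- Proposition 1 of the paper. The Coordinate block privacy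
mechanism `Q₁`, applied independently to each individual, provides
non-interactive `α`-locally differentially private views: for every pair of
inputs `x, x'` and every measurable set `B` of outputs,
`Q₁(B | X = x) ≤ e^α · Q₁(B | X = x')`, where `α = Σ_ℓ α_ℓ`. -/
theorem coordinate_block_mechanism_isLDP
    {𝒳 : Type*} [MeasurableSpace 𝒳]
    {𝒥 𝓛 : Type*} [Fintype 𝒥] [DecidableEq 𝒥] [Fintype 𝓛] [DecidableEq 𝓛]
    (blk : 𝒥 → 𝓛) (hblk : Function.Surjective blk)
    (αl : 𝓛 → ℝ) (hαl : ∀ ℓ, 0 < αl ℓ)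
    (B₀ : ℝ) (hB₀ : 0 < B₀)
    (φ : 𝒥 → 𝒳 → ℝ) (hφ : ∀ j x, |φ j x| ≤ B₀)
    (α : ℝ) (hα : α = ∑ ℓ, αl ℓ) :
    ∀ (x x' : 𝒳) (B : Set (𝒥 → ℝ)), MeasurableSet B →
      mechQ blk αl B₀ φ x B ≤ ENNReal.ofReal (Real.exp α) * mechQ blk αl B₀ φ x' B := by
  intro x x' B hB
  have happ : ∀ y : 𝒳, mechQ blk αl B₀ φ y B
      = ∑ σ : 𝒥 → Bool, ENNReal.ofReal (mechP blk αl B₀ φ y σ)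
          * (Measure.dirac (zOf blk αl B₀ σ)) B := by
    intro y
    rw [mechQ, Measure.finset_sum_apply]
    apply Finset.sum_congr rfl
    intro σ _
    rw [Measure.smul_apply, smul_eq_mul]
  rw [happ x, happ x', Finset.mul_sum]
  apply Finset.sum_le_sum
  intro σ _
  rw [← mul_assoc]
  apply mul_le_mul_left
  rw [← ENNReal.ofReal_mul (Real.exp_pos α).le]
  apply ENNReal.ofReal_le_ofReal
  rw [hα]
  exact mechP_le blk αl B₀ φ hblk hαl hB₀ hφ x x' σ
end

section
/- Let A > 0, B₀ > 0, k ∈ ℕ*, and a ∈ (0, A]. Define Γ_k = 2^{k−1} / C(k−1, ⌊(k−1)/2⌋) (binomial coefficient) and B_k(a) = B₀ Γ_k (e^a + 1)/(e^a − 1). Then B_k(a) ≤ 2 B₀ ξ_A √k / a, where ξ_A = A(e^A + 1)/(e^A − 1). -/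
open Real

lemma key_exp (x : ℝ) (hx : 0 ≤ x) : 0 ≤ exp x ^ 2 - 2 * x * exp x - 1 := by
  nlinarith [Real.quadratic_le_exp_of_nonneg hx, Real.exp_pos x, sq_nonneg (x^2), sq_nonneg x]

lemma g_mono {a A : ℝ} (ha : 0 < a) (haA : a ≤ A) :
    a * (exp a + 1) / (exp a - 1) ≤ A * (exp A + 1) / (exp A - 1) := by
  set f : ℝ → ℝ := fun x => x * (exp x + 1) / (exp x - 1) with hf
  have hderiv : ∀ x ∈ Set.Ioi (0:ℝ), HasDerivAt f
      (((1 * (exp x + 1) + x * exp x) * (exp x - 1) - (x * (exp x + 1)) * exp x) / (exp x - 1)^2) x := by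
    intro x hx
    have hx0 : (0:ℝ) < x := hx
    have hne : exp x - 1 ≠ 0 := by
      have : (1:ℝ) < exp x := by
        rw [← Real.exp_zero]; exact Real.exp_lt_exp.mpr hx0
      linarith
    exact ((hasDerivAt_id x).mul ((Real.hasDerivAt_exp x).add_const 1)).div
      ((Real.hasDerivAt_exp x).sub_const 1) hne
  have hmono : MonotoneOn f (Set.Ioi 0) := by
    apply monotoneOn_of_deriv_nonneg (convex_Ioi 0)
    · exact fun x hx => (hderiv x hx).continuousAt.continuousWithinAt
    · rw [interior_Ioi]
      exact fun x hx => (hderiv x hx).differentiableAt.differentiableWithinAt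
    · rw [interior_Ioi]
      intro x hx
      rw [(hderiv x hx).deriv]
      have h1 := key_exp x (le_of_lt hx)
      have h2 : ((1 * (exp x + 1) + x * exp x) * (exp x - 1) - (x * (exp x + 1)) * exp x)
          = exp x ^ 2 - 2 * x * exp x - 1 := by ring
      rw [h2]
      exact div_nonneg h1 (sq_nonneg _)
  exact hmono (Set.mem_Ioi.mpr ha) (Set.mem_Ioi.mpr (lt_of_lt_of_le ha haA)) haA

lemma cb_sqrt (m : ℕ) (hm : 1 ≤ m) :
    (4:ℝ)^m ≤ 2 * Real.sqrt m * (Nat.centralBinom m : ℝ) := by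
  induction m, hm using Nat.le_induction with
  | base => norm_num [Nat.centralBinom, Real.sqrt_one]
  | succ m hm ih =>
    have hrec : ((m+1 : ℕ) : ℝ) * (Nat.centralBinom (m+1) : ℝ)
        = 2 * (2*(m:ℝ)+1) * (Nat.centralBinom m : ℝ) := by
      have := congrArg (Nat.cast : ℕ → ℝ) (Nat.succ_mul_centralBinom_succ m)
      push_cast at this ⊢
      linarith
    set s := Real.sqrt m with hs
    have ht' : Real.sqrt ((m:ℕ)+1 : ℕ) = Real.sqrt ((m:ℝ)+1) := by push_cast; ring_nf
    set t := Real.sqrt ((m:ℝ)+1) with ht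
    have hs2 : s^2 = m := Real.sq_sqrt (by positivity)
    have ht2 : t^2 = (m:ℝ)+1 := Real.sq_sqrt (by positivity)
    have hs0 : 0 ≤ s := Real.sqrt_nonneg _
    have ht0 : 0 ≤ t := Real.sqrt_nonneg _
    have hcb0 : (0:ℝ) ≤ (Nat.centralBinom m : ℝ) := by positivity
    have hm1 : (1:ℝ) ≤ (m:ℝ) := by exact_mod_cast hm
    have hkey : 2 * s * ((m:ℝ)+1) ≤ t * (2*(m:ℝ)+1) := by
      have e1 : (2 * s * ((m:ℝ)+1))^2 = 4 * s^2 * ((m:ℝ)+1)^2 := by ring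
      have e2 : (t * (2*(m:ℝ)+1))^2 = t^2 * (2*(m:ℝ)+1)^2 := by ring
      have hsq : (2 * s * ((m:ℝ)+1))^2 ≤ (t * (2*(m:ℝ)+1))^2 := by
        rw [e1, e2, hs2, ht2]; nlinarith [hm1]
      exact le_of_sq_le_sq hsq (by positivity)
    have hmpos : (0:ℝ) < (m:ℝ) + 1 := by positivity
    rw [ht']
    have hc1 : (Nat.centralBinom (m+1) : ℝ) = 2 * (2*(m:ℝ)+1) * (Nat.centralBinom m : ℝ) / ((m:ℝ)+1) := by
      field_simp
      push_cast at hrec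
      linarith
    calc (4:ℝ)^(m+1) = 4 * (4:ℝ)^m := by ring
    _ ≤ 4 * (2 * s * (Nat.centralBinom m : ℝ)) := by linarith
    _ ≤ 2 * t * (2 * (2*(m:ℝ)+1) * (Nat.centralBinom m : ℝ)) / ((m:ℝ)+1) := by
        rw [le_div_iff₀ hmpos]
        nlinarith [mul_le_mul_of_nonneg_right hkey hcb0]
    _ = 2 * t * (Nat.centralBinom (m+1) : ℝ) := by rw [hc1]; ring

lemma gam_pos (k : ℕ) : 0 < Gam k := by
  unfold Gam
  have h : 0 < (Nat.choose (k-1) ((k-1)/2) : ℝ) := by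
    exact_mod_cast Nat.choose_pos (Nat.div_le_self _ _)
  positivity

lemma gam_le (k : ℕ) (hk : 1 ≤ k) : Gam k ≤ 2 * Real.sqrt k := by
  obtain ⟨n, rfl⟩ : ∃ n, k = n + 1 := ⟨k - 1, (Nat.succ_pred_eq_of_pos hk).symm⟩
  rcases Nat.even_or_odd n with ⟨m, hm⟩ | ⟨m, hm⟩
  · -- n = m + m
    subst hm
    have hch : Nat.choose (m + m) ((m+m)/2) = Nat.centralBinom m := by
      rw [show (m+m)/2 = m by omega, Nat.centralBinom]; congr 1; omega
    unfold Gam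
    simp only [Nat.add_sub_cancel, hch]
    rw [show ((m+m+1:ℕ):ℝ) = (m:ℝ)+(m:ℝ)+1 by push_cast; ring]
    rcases Nat.eq_zero_or_pos m with rfl | hm1
    · norm_num [Nat.centralBinom, Real.sqrt_one]
    · rw [show m+m = 2*m by ring, pow_mul]
      norm_num
      have hcb := cb_sqrt m hm1
      have hcpos : (0:ℝ) < (Nat.centralBinom m : ℝ) := by
        exact_mod_cast Nat.centralBinom_pos m
      rw [div_le_iff₀ hcpos]
      calc (4:ℝ)^m ≤ 2 * Real.sqrt m * (Nat.centralBinom m : ℝ) := hcb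
      _ ≤ 2 * Real.sqrt ((m:ℝ)+m+1) * (Nat.centralBinom m : ℝ) := by
          have h1 : Real.sqrt m ≤ Real.sqrt ((m:ℝ)+m+1) :=
            Real.sqrt_le_sqrt (by linarith [Nat.cast_nonneg (α := ℝ) m])
          nlinarith [Real.sqrt_nonneg (m:ℝ), hcpos.le, h1]
  · -- n = 2m + 1
    subst hm
    have hch : Nat.centralBinom (m+1) = 2 * Nat.choose (2*m+1) m := by
      rw [Nat.centralBinom, show 2*(m+1) = (2*m+1)+1 by ring, Nat.choose_succ_succ',
        Nat.choose_symm_half]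
      omega
    have hd : (2*m+1)/2 = m := by omega
    unfold Gam
    simp only [Nat.add_sub_cancel, hd]
    have hcpos : (0:ℝ) < (Nat.choose (2*m+1) m : ℝ) := by
      exact_mod_cast Nat.choose_pos (by omega : m ≤ 2*m+1)
    rw [div_le_iff₀ hcpos]
    have hcb := cb_sqrt (m+1) (by omega)
    have hchR : (Nat.centralBinom (m+1) : ℝ) = 2 * (Nat.choose (2*m+1) m : ℝ) := by
      exact_mod_cast congrArg (Nat.cast : ℕ → ℝ) hch
    have h2 : (2:ℝ)^(2*m+1) = (4:ℝ)^(m+1) / 2 := by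
      rw [show (4:ℝ) = 2^2 by norm_num, ← pow_mul, show 2*(m+1) = 2*m+1+1 by ring, pow_succ]
      ring
    rw [h2]
    have hmono : Real.sqrt ((m:ℝ)+1) ≤ Real.sqrt ((2*m+1+1:ℕ):ℝ) := by
      apply Real.sqrt_le_sqrt; push_cast; linarith [Nat.cast_nonneg (α := ℝ) m]
    have hcb' : (4:ℝ)^(m+1) ≤ 2 * Real.sqrt ((2*m+1+1:ℕ):ℝ) * (Nat.centralBinom (m+1) : ℝ) := by
      calc (4:ℝ)^(m+1) ≤ 2 * Real.sqrt ((m:ℕ)+1 :ℕ) * (Nat.centralBinom (m+1) : ℝ) := hcb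
      _ = 2 * Real.sqrt ((m:ℝ)+1) * (Nat.centralBinom (m+1) : ℝ) := by
          rw [show (((m:ℕ)+1 :ℕ):ℝ) = (m:ℝ)+1 by push_cast; ring]
      _ ≤ 2 * Real.sqrt ((2*m+1+1:ℕ):ℝ) * (Nat.centralBinom (m+1) : ℝ) := by
          have : (0:ℝ) ≤ (Nat.centralBinom (m+1) : ℝ) := by positivity
          nlinarith [hmono, this]
    rw [hchR] at hcb'
    linarith

/-- Lemma 4 of the paper. For `0 < a ≤ A`, `B₀ > 0` and
`k ≥ 1`, one has `B_k(a) ≤ 2 B₀ ξ_A √k / a`, where `ξ_A = A(e^A+1)/(e^A-1)`. -/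
theorem Bk_le (A B₀ : ℝ) (hA : 0 < A) (hB₀ : 0 < B₀) (k : ℕ) (hk : 1 ≤ k)
    (a : ℝ) (ha : 0 < a) (haA : a ≤ A) :
    Bk B₀ k a ≤ 2 * B₀ * xiA A * Real.sqrt k / a := by
  have hea : (1:ℝ) < exp a := by
    rw [← Real.exp_zero]; exact Real.exp_lt_exp.mpr ha
  have heA : (1:ℝ) < exp A := by
    rw [← Real.exp_zero]; exact Real.exp_lt_exp.mpr hA
  have hmono := g_mono ha haA
  have hxi : xiA A = A * (exp A + 1) / (exp A - 1) := rfl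
  have hxipos : 0 < xiA A := by
    rw [hxi]
    exact div_pos (mul_pos hA (by positivity)) (by linarith)
  have hfrac : (exp a + 1) / (exp a - 1) ≤ xiA A / a := by
    rw [hxi, div_le_div_iff₀ (by linarith) ha]
    have hne : exp a - 1 ≠ 0 := by linarith
    have h3 : a * (exp a + 1) = (a * (exp a + 1) / (exp a - 1)) * (exp a - 1) :=
      (div_mul_cancel₀ _ hne).symm
    calc (exp a + 1) * a = (a * (exp a + 1) / (exp a - 1)) * (exp a - 1) := by
          rw [← h3]; ring
    _ ≤ (A * (exp A + 1) / (exp A - 1)) * (exp a - 1) :=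
          mul_le_mul_of_nonneg_right hmono (by linarith)
  have hgam := gam_le k hk
  have hgam0 := (gam_pos k).le
  have hfrac0 : 0 ≤ (exp a + 1) / (exp a - 1) :=
    div_nonneg (by positivity) (by linarith)
  unfold Bk
  calc B₀ * ((exp a + 1) / (exp a - 1)) * Gam k
      ≤ B₀ * (xiA A / a) * Gam k := by
        apply mul_le_mul_of_nonneg_right _ hgam0
        exact mul_le_mul_of_nonneg_left hfrac hB₀.le
    _ ≤ B₀ * (xiA A / a) * (2 * Real.sqrt k) := by
        exact mul_le_mul_of_nonneg_left hgam
          (mul_nonneg hB₀.le (div_nonneg hxipos.le ha.le))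
    _ = 2 * B₀ * xiA A * Real.sqrt k / a := by
        field_simp
end
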